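/- Lemma 2 (reversed-KL optimization has the same structural solution): let ε > 0 and let ã be the reverse embedding factor. Then the set of real numbers { Real.log (det Σs) : (μs, Σs) D′-feasible } has greatest element n · Real.log ã + Real.log (det Σc), and this greatest value is attained at the D′-feasible pair μs = μc, Σs = ã • Σc; i.e., the optimal stego-parameters for the reversed KL divergence have the same form μs = μc and Σs proportional to Σc as in the forward case. -/

import Mathlib

/-!
Put `L = n log ã + log det Σc - log det Σs`. The bound `log det M ≤ tr M - n`, which is
`log x ≤ x - 1` on the eigenvalues, applies to `M = Σs⁻¹ (ã Σc)` because `M` is similar to a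
positive definite matrix; it reads `L ≤ ã tr(Σs⁻¹ Σc) - n`. Since `2ε²` is the value of `D′` at
`(μc, ã Σc)`, feasibility gives `tr(Σs⁻¹ Σc) ≤ n / ã + L`. Hence `L ≤ ã L`, and `L ≥ 0` as `ã > 1`.
-/

open Matrix

/-- The reversed Gaussian KL expression. -/
noncomputable def klGaussRev {n : ℕ} (Sc : Matrix (Fin n) (Fin n) ℝ) (μc : Fin n → ℝ)
    (Ss : Matrix (Fin n) (Fin n) ℝ) (μs : Fin n → ℝ) : ℝ :=
  (1 / 2) * ((Ss⁻¹ * Sc).trace + (μs - μc) ⬝ᵥ (Ss⁻¹ *ᵥ (μs - μc))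
    + Real.log (Ss.det / Sc.det) - n)

namespace Matrix

variable {ι : Type*} [Fintype ι] [DecidableEq ι]

theorem PosDef.log_det_le_trace_sub_card {A : Matrix ι ι ℝ} (hA : A.PosDef) :
    Real.log A.det ≤ A.trace - Fintype.card ι := by
  have hlog (i : ι) : Real.log (hA.1.eigenvalues i) ≤ hA.1.eigenvalues i - 1 :=
    Real.log_le_sub_one_of_pos (hA.eigenvalues_pos i)
  have := Finset.sum_le_sum fun i (_ : i ∈ Finset.univ) ↦ hlog i
  simp only [Finset.sum_sub_distrib, Finset.sum_const, Finset.card_univ, nsmul_one] at this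
  simpa [hA.1.det_eq_prod_eigenvalues, hA.1.trace_eq_sum_eigenvalues,
    Real.log_prod fun i _ ↦ (hA.eigenvalues_pos i).ne'] using this

open scoped MatrixOrder in
/-- `A * B` has the trace and determinant of the positive definite matrix `√B * A * √B`. -/
theorem PosDef.log_det_mul_le_trace_mul_sub_card {A B : Matrix ι ι ℝ} (hA : A.PosDef)
    (hB : B.PosDef) : Real.log (A * B).det ≤ (A * B).trace - Fintype.card ι := by
  set S := CFC.sqrt B
  have hSS : S * S = B := CFC.sqrt_mul_sqrt_self B hB.posSemidef.nonneg
  have hSstar : star S = S := (CFC.sqrt_nonneg B).posSemidef.1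
  have hSunit : IsUnit S := CFC.isUnit_sqrt_iff_isStrictlyPositive.mpr hB.isStrictlyPositive
  have hSAS : (S * A * S).PosDef := by
    simpa [hSstar] using (IsUnit.posDef_star_left_conjugate_iff hSunit).mpr hA
  have htrace : (S * A * S).trace = (A * B).trace := by
    rw [trace_mul_comm, ← Matrix.mul_assoc, hSS, trace_mul_comm]
  have hdet : (S * A * S).det = (A * B).det := by
    rw [← hSS]; simp only [det_mul]; ring
  simpa [htrace, hdet] using hSAS.log_det_le_trace_sub_card

theorem log_det_smul {A : Matrix ι ι ℝ} (hA : A.det ≠ 0) {a : ℝ} (ha : a ≠ 0) :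
    Real.log (a • A).det = Fintype.card ι * Real.log a + Real.log A.det := by
  rw [det_smul, Real.log_mul (pow_ne_zero _ ha) hA, Real.log_pow]

end Matrix

section klGaussRev

variable {n : ℕ} {Sc Ss : Matrix (Fin n) (Fin n) ℝ} (μc : Fin n → ℝ)

theorem klGaussRev_smul_self (hSc : Sc.det ≠ 0) {a : ℝ} (ha : a ≠ 0) :
    klGaussRev Sc μc (a • Sc) μc = n / 2 * (1 / a + Real.log a - 1) := by
  have hinv : (a • Sc)⁻¹ = a⁻¹ • Sc⁻¹ :=
    inv_eq_left_inv (by simp [nonsing_inv_mul _ (Ne.isUnit hSc), smul_smul, ha])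
  simp only [klGaussRev, hinv, Algebra.smul_mul_assoc, nonsing_inv_mul _ (Ne.isUnit hSc),
    trace_smul, trace_one, Fintype.card_fin, smul_eq_mul, sub_self, mulVec_zero, dotProduct_zero,
    add_zero, det_smul, mul_div_cancel_right₀ _ hSc, Real.log_pow]
  ring

theorem log_det_le_log_det_smul_of_klGaussRev_le {μs : Fin n → ℝ} (hSc : Sc.PosDef)
    (hSs : Ss.PosDef) {a : ℝ} (ha : 1 < a)
    (h : klGaussRev Sc μc Ss μs ≤ klGaussRev Sc μc (a • Sc) μc) :
    Real.log Ss.det ≤ Real.log (a • Sc).det := by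
  have ha₀ : 0 < a := by linarith
  have hSc₀ := hSc.det_pos
  have hSs₀ := hSs.det_pos
  rw [klGaussRev_smul_self μc hSc₀.ne' ha₀.ne'] at h
  rw [log_det_smul hSc₀.ne' ha₀.ne', Fintype.card_fin]
  have hquad : 0 ≤ (μs - μc) ⬝ᵥ (Ss⁻¹ *ᵥ (μs - μc)) := by
    simpa using hSs.inv.posSemidef.dotProduct_mulVec_nonneg (μs - μc)
  have htangent := hSs.inv.log_det_mul_le_trace_mul_sub_card (hSc.smul ha₀)
  rw [det_mul, Real.log_mul (by simp [hSs₀.ne']) (hSc.smul ha₀).det_pos.ne',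
    log_det_smul hSc₀.ne' ha₀.ne', det_nonsing_inv, Ring.inverse_eq_inv', Real.log_inv,
    Matrix.mul_smul, trace_smul, Fintype.card_fin, smul_eq_mul] at htangent
  rw [klGaussRev, Real.log_div hSs₀.ne' hSc₀.ne',
    show (n : ℝ) / 2 * (1 / a + Real.log a - 1) = (n / a + n * Real.log a - n) / 2 by ring] at h
  set L := n * Real.log a + Real.log Sc.det - Real.log Ss.det with hL_def
  have htrace : (Ss⁻¹ * Sc).trace ≤ n / a + L := by linarith
  have hL : L ≤ a * L := by
    have := mul_le_mul_of_nonneg_left htrace ha₀.le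
    rw [mul_add, mul_div_cancel₀ _ ha₀.ne'] at this
    linarith
  nlinarith

end klGaussRev

/-- Lemma 2 (reversed-KL optimization has the same structural solution):
the set of `log det Σs` over D′-feasible pairs has greatest element
`n · log ã + log det Σc`, attained at `μs = μc`, `Σs = ã • Σc`. -/
theorem klGaussRev_max_logdet {n : ℕ} (hn : 1 ≤ n)
    (Sc : Matrix (Fin n) (Fin n) ℝ) (hSc : Sc.PosDef) (μc : Fin n → ℝ)
    (ε : ℝ) (hε : 0 < ε)
    (atilde : ℝ) (hatilde1 : 1 ≤ atilde)
    (hatilde : 1 / atilde + Real.log atilde - 1 = 4 * ε ^ 2 / n) :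
    IsGreatest
        {x : ℝ | ∃ (μs : Fin n → ℝ) (Ss : Matrix (Fin n) (Fin n) ℝ),
          Ss.PosDef ∧ klGaussRev Sc μc Ss μs ≤ 2 * ε ^ 2 ∧ x = Real.log Ss.det}
        ((n : ℝ) * Real.log atilde + Real.log Sc.det) ∧
      (atilde • Sc).PosDef ∧ klGaussRev Sc μc (atilde • Sc) μc ≤ 2 * ε ^ 2 ∧
        Real.log (atilde • Sc).det = (n : ℝ) * Real.log atilde + Real.log Sc.det := by
  have hn₀ : (0 : ℝ) < n := by exact_mod_cast hn
  have ha : 1 < atilde := by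
    refine hatilde1.lt_of_ne fun h ↦ ?_
    have : 0 < 4 * ε ^ 2 / n := by positivity
    simp only [← h, div_one, Real.log_one, add_zero, sub_self] at hatilde
    linarith
  have ha₀ : atilde ≠ 0 := by positivity
  have hPD : (atilde • Sc).PosDef := hSc.smul (by positivity)
  have hval : klGaussRev Sc μc (atilde • Sc) μc = 2 * ε ^ 2 := by
    rw [klGaussRev_smul_self μc hSc.det_pos.ne' ha₀, hatilde]
    field_simp
    ring
  have hlogdet : Real.log (atilde • Sc).det = n * Real.log atilde + Real.log Sc.det := by
    rw [log_det_smul hSc.det_pos.ne' ha₀, Fintype.card_fin]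
  refine ⟨⟨⟨μc, atilde • Sc, hPD, hval.le, hlogdet.symm⟩, ?_⟩, hPD, hval.le, hlogdet⟩
  rintro _ ⟨μs, Ss, hSs, hfeas, rfl⟩
  rw [← hlogdet]
  exact log_det_le_log_det_smul_of_klGaussRev_le μc hSc hSs ha (hval ▸ hfeas)
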